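/- Fix p ∈ (0,1), ε ∈ (0, 1/84], and integers k, m ≥ 1 with km ≤ d, and let Q_k be a subgraph of Q^d(k) such that every H ∈ Q_{k,m} satisfies (1−ε)p·2^m ≤ |V(H) ∩ V(Q_k)| ≤ (1+ε)p·2^m and every pair H, H' ∈ Q_{k,m} with |V(H) ∩ V(H')| = 2^{m−1} satisfies (1/2−ε)p·2^m ≤ |V(H) ∩ V(H') ∩ V(Q_k)| ≤ (1/2+ε)p·2^m. Let S ⊆ V(Q_k); call H ∈ Q_{k,m} S-dense if |V(H) ∩ S| ≥ (2/3)p·2^m, and S-moderate if (1/7)p·2^m ≤ |V(H) ∩ S| ≤ (2/3)p·2^m. If H ∈ Q_{k,m} is S-dense and H' ∈ Q_{k,m} is not S-dense, then every path from H to H' in G_square contains an S-moderate vertex. -/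

import Mathlib

open MeasureTheory

noncomputable section

abbrev Vtx (d : ℕ) := Fin d → ZMod 2

/-- The hypercube graph `Q^d` on vertex set `{0,1}^d`. -/
def cubeGraph (d : ℕ) : SimpleGraph (Vtx d) where
  Adj u v := hammingDist u v = 1
  symm := by
    constructor
    intro u v (h : hammingDist u v = 1)
    rwa [hammingDist_comm]
  loopless := by
    constructor
    intro u h
    simp [hammingDist_self] at h

/-- The graph `Q^d(k)`: vertices at Hamming distance exactly `k` are adjacent. -/
def distGraph (d k : ℕ) : SimpleGraph (Vtx d) where
  Adj u v := u ≠ v ∧ hammingDist u v = k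
  symm := by
    constructor
    intro u v h
    exact ⟨h.1.symm, by rw [hammingDist_comm]; exact h.2⟩
  loopless := by
    constructor
    intro u h
    exact h.1 rfl

/-- Embedding of `{0,1}^d` into `ℝ^d`. -/
def toR {d : ℕ} (v : Vtx d) : Fin d → ℝ := fun i => ((v i).val : ℝ)

/-- The set of retained vertices of a percolation configuration. -/
def retained {d : ℕ} (ω : Vtx d → Bool) : Set (Vtx d) := {v | ω v = true}

/-- `u v` is an edge of the polytope `conv S`. -/
def IsPolytopeEdge {d : ℕ} (S : Set (Vtx d)) (u v : Vtx d) : Prop :=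
  u ∈ S ∧ v ∈ S ∧ u ≠ v ∧ ∃ (f : (Fin d → ℝ) →ₗ[ℝ] ℝ) (c : ℝ),
    f (toR u) = c ∧ f (toR v) = c ∧ ∀ z ∈ S, z ≠ u → z ≠ v → c < f (toR z)

/-- The graph of the polytope `conv S`. -/
def polytopeGraph {d : ℕ} (S : Set (Vtx d)) : SimpleGraph (Vtx d) where
  Adj u v := IsPolytopeEdge S u v
  symm := by
    constructor
    rintro u v ⟨hu, hv, hne, f, c, h1, h2, h3⟩
    exact ⟨hv, hu, hne.symm, f, c, h2, h1, fun z hz z1 z2 => h3 z hz z2 z1⟩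
  loopless := by
    constructor
    rintro u ⟨-, -, hne, -⟩
    exact hne rfl

/-- Degree of a vertex in a graph. -/
def deg {V : Type*} (G : SimpleGraph V) (v : V) : ℕ := {u | G.Adj v u}.ncard

/-- External neighbourhood of a set in a graph. -/
def extNbhd {V : Type*} (G : SimpleGraph V) (S : Set V) : Set V :=
  {v | v ∉ S ∧ ∃ u ∈ S, G.Adj u v}

/-- Number of edges with exactly one endpoint in `S`. -/
def edgeBoundary {V : Type*} (G : SimpleGraph V) (S : Set V) : ℕ :=
  {p : V × V | p.1 ∈ S ∧ p.2 ∉ S ∧ G.Adj p.1 p.2}.ncard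

/-- Bernoulli measure on `Bool`. -/
def bern (p : ℝ) : Measure Bool :=
  ENNReal.ofReal p • Measure.dirac true + ENNReal.ofReal (1 - p) • Measure.dirac false

instance bern_finite (p : ℝ) : IsFiniteMeasure (bern p) := by
  constructor
  simp only [bern, Measure.coe_add, Pi.add_apply, Measure.smul_apply, smul_eq_mul]
  exact ENNReal.add_lt_top.2
    ⟨ENNReal.mul_lt_top ENNReal.ofReal_lt_top (measure_lt_top _ _),
     ENNReal.mul_lt_top ENNReal.ofReal_lt_top (measure_lt_top _ _)⟩

/-- Product Bernoulli measure: each vertex of `{0,1}^d` retained independently w.p. `p`. -/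
def vertexMeasure (d : ℕ) (p : ℝ) : Measure (Vtx d → Bool) :=
  Measure.pi fun _ => bern p

/-- Product Bernoulli measure on edge configurations. -/
def edgeMeasure (d : ℕ) (q : ℝ) : Measure (Sym2 (Vtx d) → Bool) :=
  Measure.pi fun _ => bern q

/-- Joint law of independent vertex- and edge-percolation configurations. -/
def mixedMeasure (d : ℕ) (p q : ℝ) :
    Measure ((Vtx d → Bool) × (Sym2 (Vtx d) → Bool)) :=
  (vertexMeasure d p).prod (edgeMeasure d q)

/-- The induced subgraph `Q^d_p` of the hypercube given a vertex configuration. -/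
def inducedGraph (d : ℕ) (f : Vtx d → Bool) : SimpleGraph (Vtx d) where
  Adj u v := (cubeGraph d).Adj u v ∧ f u = true ∧ f v = true
  symm := by
    constructor
    rintro u v ⟨h, hu, hv⟩
    exact ⟨(cubeGraph d).symm.1 _ _ h, hv, hu⟩
  loopless := ⟨fun u h => (cubeGraph d).loopless.1 u h.1⟩

/-- The mixed percolation `Q^d_{p,q}` given vertex and edge configurations. -/
def mixedGraph (d : ℕ) (f : Vtx d → Bool) (g : Sym2 (Vtx d) → Bool) :
    SimpleGraph (Vtx d) where
  Adj u v := (cubeGraph d).Adj u v ∧ f u = true ∧ f v = true ∧ g s(u, v) = true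
  symm := by
    constructor
    rintro u v ⟨h, hu, hv, he⟩
    refine ⟨(cubeGraph d).symm.1 _ _ h, hv, hu, ?_⟩
    rwa [Sym2.eq_swap]
  loopless := ⟨fun u h => (cubeGraph d).loopless.1 u h.1⟩

/-- The subgraph of `Q^d` with vertex set `U` and edges of `F` inside `U`. -/
def setGraph (d : ℕ) (U : Set (Vtx d)) (F : Set (Sym2 (Vtx d))) :
    SimpleGraph (Vtx d) where
  Adj u v := (cubeGraph d).Adj u v ∧ u ∈ U ∧ v ∈ U ∧ s(u, v) ∈ F
  symm := by
    constructor
    rintro u v ⟨h, hu, hv, he⟩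
    refine ⟨(cubeGraph d).symm.1 _ _ h, hv, hu, ?_⟩
    rwa [Sym2.eq_swap]
  loopless := ⟨fun u h => (cubeGraph d).loopless.1 u h.1⟩

/-- Indicator vector `1_e ∈ F_2^d` of a set of coordinates. -/
def indic {d : ℕ} (e : Finset (Fin d)) : Vtx d := fun i => if i ∈ e then 1 else 0

/-- The family `D_{k,m}` of sets of `m` pairwise disjoint `k`-subsets of `[d]`. -/
def Dfam (d k m : ℕ) : Set (Finset (Finset (Fin d))) :=
  {D | D.card = m ∧ (∀ e ∈ D, e.card = k) ∧
    ∀ e ∈ D, ∀ f ∈ D, e ≠ f → Disjoint e f}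

/-- Vertex set of the cube `Q(D,v)`. -/
def QV {d : ℕ} (D : Finset (Finset (Fin d))) (v : Vtx d) : Set (Vtx d) :=
  {u | ∃ I : Finset (Finset (Fin d)), I ⊆ D ∧ u = v + ∑ e ∈ I, indic e}

/-- Adjacency in the cube `Q(D,v)`. -/
def QAdj {d : ℕ} (D : Finset (Finset (Fin d))) (v : Vtx d) (u w : Vtx d) : Prop :=
  u ∈ QV D v ∧ w ∈ QV D v ∧ ∃ e ∈ D, u + w = indic e

/-- The cube `Q(D,v)` as a simple graph on the ambient vertex set. -/
def Qgraph {d : ℕ} (D : Finset (Finset (Fin d))) (v₀ : Vtx d) : SimpleGraph (Vtx d) where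
  Adj u w := u ≠ w ∧ QAdj D v₀ u w
  symm := by
    constructor
    rintro u w ⟨hne, h1, h2, e, he, hs⟩
    exact ⟨hne.symm, h2, h1, e, he, by rwa [add_comm]⟩
  loopless := ⟨fun u h => h.1 rfl⟩

/-- Edge set of the cube `Q(D,v)` as a set of unordered pairs. -/
def Qedges {d : ℕ} (D : Finset (Finset (Fin d))) (v : Vtx d) : Set (Sym2 (Vtx d)) :=
  {e | ∃ u w : Vtx d, e = s(u, w) ∧ u ≠ w ∧ QAdj D v u w}

/-- The family `Q_{k,m}` of cubes `Q(D,v)`, represented as (vertex set, edge set) pairs. -/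
def CubeFam (d k m : ℕ) : Set (Set (Vtx d) × Set (Sym2 (Vtx d))) :=
  {H | ∃ D ∈ Dfam d k m, ∃ v : Vtx d, H.1 = QV D v ∧ H.2 = Qedges D v}

/-- The auxiliary graph `G_□` on `Q_{k,m}`. -/
def Gsquare (d k m : ℕ) : SimpleGraph (CubeFam d k m) where
  Adj H H' := H ≠ H' ∧ (H.1.1 ∩ H'.1.1).ncard = 2 ^ (m - 1)
  symm := by
    constructor
    rintro H H' ⟨hne, h⟩
    exact ⟨hne.symm, by rwa [Set.inter_comm]⟩
  loopless := ⟨fun H h => h.1 rfl⟩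

/-- The natural embedding of `Q^m` onto the cube `Q(D,v₀)` with directions `E 0, …, E (m-1)`. -/
def cubeEmb {d : ℕ} (m : ℕ) (E : Fin m → Finset (Fin d)) (v₀ : Vtx d) (y : Vtx m) : Vtx d :=
  v₀ + ∑ i, y i • indic (E i)

instance setPairMS (X Y : Type*) : MeasurableSpace (Set X × Set Y) := ⊤

/-- The (vertex set, edge set) pair of the graph `H_p[P_k]` transported to `Q^m`. -/
def polyMap {d : ℕ} (m k : ℕ) (E : Fin m → Finset (Fin d)) (v₀ : Vtx d)
    (ω : Vtx d → Bool) : Set (Vtx m) × Set (Sym2 (Vtx m)) :=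
  ({y | ω (cubeEmb m E v₀ y) = true},
   {e | ∃ y z : Vtx m, e = s(y, z) ∧ (cubeGraph m).Adj y z ∧
      IsPolytopeEdge (retained ω) (cubeEmb m E v₀ y) (cubeEmb m E v₀ z) ∧
      hammingDist (cubeEmb m E v₀ y) (cubeEmb m E v₀ z) = k})

/-- The (vertex set, edge set) pair of the mixed percolation `Q^m_{p,q}`. -/
def mixMap (m : ℕ) (ω : (Vtx m → Bool) × (Sym2 (Vtx m) → Bool)) :
    Set (Vtx m) × Set (Sym2 (Vtx m)) :=
  ({y | ω.1 y = true}, (mixedGraph m ω.1 ω.2).edgeSet)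

/-- The smallest subcube `Q^d[x,y]` of `Q^d` containing `x` and `y`. -/
def subcube {d : ℕ} (x y : Vtx d) : Set (Vtx d) := {z | ∀ i, x i = y i → z i = x i}

/-- `U` has the `α`-star property: pairwise vertex-disjoint stars centred at the
elements of `U`, each with at least `(1 - α/2)d` leaves. -/
def HasStarProperty {d : ℕ} (α : ℝ) (U : Set (Vtx d)) : Prop :=
  ∃ L : Vtx d → Set (Vtx d),
    (∀ u ∈ U, (∀ w ∈ L u, (cubeGraph d).Adj u w) ∧ ((1 - α / 2) * d ≤ ((L u).ncard : ℝ))) ∧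
    (∀ u ∈ U, ∀ u' ∈ U, u ≠ u' → Disjoint (insert u (L u)) (insert u' (L u')))

end


/-- If `H` is `S`-dense and `H''` is `G_□`-adjacent to `H`, then
`|V(H'') ∩ S| ≥ (1/7) p 2^m`. -/
theorem nbr_of_dense (p ε : ℝ) (hp : p ∈ Set.Ioo (0 : ℝ) 1)
    (hε : 0 < ε) (hε' : ε ≤ 1 / 84)
    (d k m : ℕ)
    (W : Set (Vtx d))
    (hcubes : ∀ D ∈ Dfam d k m, ∀ v : Vtx d,
      (1 - ε) * p * 2 ^ m ≤ ((QV D v ∩ W).ncard : ℝ) ∧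
      ((QV D v ∩ W).ncard : ℝ) ≤ (1 + ε) * p * 2 ^ m)
    (hpairs : ∀ D ∈ Dfam d k m, ∀ v : Vtx d, ∀ D' ∈ Dfam d k m, ∀ v' : Vtx d,
      (QV D v ∩ QV D' v').ncard = 2 ^ (m - 1) →
      (1 / 2 - ε) * p * 2 ^ m ≤ ((QV D v ∩ QV D' v' ∩ W).ncard : ℝ) ∧
      ((QV D v ∩ QV D' v' ∩ W).ncard : ℝ) ≤ (1 / 2 + ε) * p * 2 ^ m)
    (S : Set (Vtx d)) (hS : S ⊆ W)
    (H H'' : CubeFam d k m)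
    (hadj : (H.1.1 ∩ H''.1.1).ncard = 2 ^ (m - 1))
    (hdense : 2 / 3 * p * 2 ^ m ≤ ((H.1.1 ∩ S).ncard : ℝ)) :
    1 / 7 * p * 2 ^ m ≤ ((H''.1.1 ∩ S).ncard : ℝ) := by
  obtain ⟨D, hD, v, hV, -⟩ := H.2
  obtain ⟨D', hD', v', hV', -⟩ := H''.2
  rw [hV, hV'] at hadj
  rw [hV] at hdense
  rw [hV']
  set A := QV D v with hA
  set B := QV D' v' with hB
  have hub := (hcubes D hD v).2
  have hlb := (hpairs D hD v D' hD' v' hadj).1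
  -- inclusion
  have hincl : A ∩ S ⊆ (A ∩ B ∩ S) ∪ ((A ∩ W) \ (A ∩ B ∩ W)) := by
    intro x hx
    by_cases hxB : x ∈ B
    · exact Or.inl ⟨⟨hx.1, hxB⟩, hx.2⟩
    · exact Or.inr ⟨⟨hx.1, hS hx.2⟩, fun h => hxB h.1.2⟩
  have hsub : A ∩ B ∩ W ⊆ A ∩ W := fun x hx => ⟨hx.1.1, hx.2⟩
  have h1 : (A ∩ S).ncard ≤ (A ∩ B ∩ S).ncard + ((A ∩ W) \ (A ∩ B ∩ W)).ncard :=
    le_trans (Set.ncard_le_ncard hincl (Set.toFinite _)) (Set.ncard_union_le _ _)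
  have h2 : ((A ∩ W) \ (A ∩ B ∩ W)).ncard = (A ∩ W).ncard - (A ∩ B ∩ W).ncard :=
    Set.ncard_diff hsub (Set.toFinite _)
  have h3 : (A ∩ B ∩ W).ncard ≤ (A ∩ W).ncard := Set.ncard_le_ncard hsub (Set.toFinite _)
  have h4 : ((A ∩ S).ncard : ℝ) ≤ ((A ∩ B ∩ S).ncard : ℝ)
      + ((A ∩ W).ncard : ℝ) - ((A ∩ B ∩ W).ncard : ℝ) := by
    rw [h2] at h1
    have h1' : ((A ∩ S).ncard : ℝ) ≤ (((A ∩ B ∩ S).ncard + ((A ∩ W).ncard - (A ∩ B ∩ W).ncard) : ℕ) : ℝ) :=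
      Nat.cast_le.2 h1
    push_cast [Nat.cast_sub h3] at h1'
    linarith
  have h5 : ((A ∩ B ∩ S).ncard : ℝ) ≤ ((B ∩ S).ncard : ℝ) :=
    Nat.cast_le.2 (Set.ncard_le_ncard (fun x hx => ⟨hx.1.2, hx.2⟩) (Set.toFinite _))
  have hpos : (0 : ℝ) < p * 2 ^ m := by
    have := hp.1
    positivity
  nlinarith [hdense, hub, hlb, h4, h5, hpos]

/-- **Lemma (continuity along paths in `G_□`).** Under condition (iii) for the vertex
set `W` of `Q_k`, if `H` is `S`-dense and `H'` is not, then every path from `H` to `H'`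
in `G_□` contains an `S`-moderate cube. -/
theorem path_contains_moderate_cube (p ε : ℝ) (hp : p ∈ Set.Ioo (0 : ℝ) 1)
    (hε : 0 < ε) (hε' : ε ≤ 1 / 84)
    (d k m : ℕ) (hk : 1 ≤ k) (hm : 1 ≤ m) (hkm : k * m ≤ d)
    (W : Set (Vtx d))
    (hcubes : ∀ D ∈ Dfam d k m, ∀ v : Vtx d,
      (1 - ε) * p * 2 ^ m ≤ ((QV D v ∩ W).ncard : ℝ) ∧
      ((QV D v ∩ W).ncard : ℝ) ≤ (1 + ε) * p * 2 ^ m)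
    (hpairs : ∀ D ∈ Dfam d k m, ∀ v : Vtx d, ∀ D' ∈ Dfam d k m, ∀ v' : Vtx d,
      (QV D v ∩ QV D' v').ncard = 2 ^ (m - 1) →
      (1 / 2 - ε) * p * 2 ^ m ≤ ((QV D v ∩ QV D' v' ∩ W).ncard : ℝ) ∧
      ((QV D v ∩ QV D' v' ∩ W).ncard : ℝ) ≤ (1 / 2 + ε) * p * 2 ^ m)
    (S : Set (Vtx d)) (hS : S ⊆ W)
    (H H' : CubeFam d k m)
    (hdense : 2 / 3 * p * 2 ^ m ≤ ((H.1.1 ∩ S).ncard : ℝ))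
    (hnotdense : ¬ (2 / 3 * p * 2 ^ m ≤ ((H'.1.1 ∩ S).ncard : ℝ)))
    (P : (Gsquare d k m).Walk H H') (hP : P.IsPath) :
    ∃ H'' ∈ P.support,
      1 / 7 * p * 2 ^ m ≤ ((H''.1.1 ∩ S).ncard : ℝ) ∧
      ((H''.1.1 ∩ S).ncard : ℝ) ≤ 2 / 3 * p * 2 ^ m := by
  clear hP hkm hk hm
  induction P with
  | nil => exact absurd hdense hnotdense
  | @cons H₀ H₁ H₂ hadj P ih =>
    by_cases hd1 : 2 / 3 * p * 2 ^ m ≤ ((H₁.1.1 ∩ S).ncard : ℝ)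
    · obtain ⟨H'', hmem, hb⟩ := ih hd1 hnotdense
      exact ⟨H'', List.mem_cons_of_mem _ hmem, hb⟩
    · refine ⟨H₁, ?_, ?_, le_of_not_ge hd1⟩
      · simp [SimpleGraph.Walk.support_cons]
      · exact nbr_of_dense p ε hp hε hε' d k m W hcubes hpairs S hS H₀ H₁
          (show H₀ ≠ H₁ ∧ _ from hadj).2 hdense
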